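/- Wedge-sum representation of the value function on lines (Theorem 4, statement 3): Consider a finite POMDP with row-stochastic transition matrices P(u), row-stochastic observation matrices B(u) with strictly positive entries, nonnegative reward vectors r_u (r(i,u) ≥ 0 for all i, u), and discount ρ ∈ [0,1). Assume: (A1) each r_u has nondecreasing components; (A2) each P(u) is TP2; (A3) each B(u) is TP2. Then for every k ≥ 0 and every π̄ ∈ Π(X) with π̄(X) = 0, there exist n ∈ ℕ, nonnegative reals α_1,...,α_n, and reals f_1,...,f_n such that for every ε ∈ [0,1], writing π = (1−ε)π̄ + ε·e_X (so that e_Xᵀπ = ε), the value-iteration value function satisfies V_k(π) = Σ_{i=1}^{n} max(α_i·ε − f_i, 0). -/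

import Mathlib

open Finset

/-- Membership in the belief simplex Π(X). -/
def inSimplex {X : ℕ} (π : Fin X → ℝ) : Prop :=
  (∀ i, 0 ≤ π i) ∧ ∑ i, π i = 1

/-- A matrix is row-stochastic: nonnegative entries, rows summing to one. -/
def rowStochastic {n m : ℕ} (A : Matrix (Fin n) (Fin m) ℝ) : Prop :=
  (∀ i j, 0 ≤ A i j) ∧ ∀ i, ∑ j, A i j = 1

/-- Totally positive of order 2: all 2×2 minors nonnegative. -/
def TP2 {n m : ℕ} (A : Matrix (Fin n) (Fin m) ℝ) : Prop :=
  ∀ i i' : Fin n, ∀ y y' : Fin m, i < i' → y < y' →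
    A i y' * A i' y ≤ A i y * A i' y'

/-- Monotone likelihood ratio (MLR) order: `a ≤_r b`. -/
def MLRle {n : ℕ} (a b : Fin n → ℝ) : Prop :=
  ∀ i j : Fin n, i < j → a j * b i ≤ a i * b j

/-- The last index of `Fin n`. -/
def lastIdx (n : ℕ) [NeZero n] : Fin n :=
  ⟨n - 1, Nat.sub_lt (Nat.pos_of_ne_zero (NeZero.ne n)) Nat.one_pos⟩

/-- One-step predicted belief `Pᵀπ`. -/
noncomputable def bayesPred {X : ℕ} (P : Matrix (Fin X) (Fin X) ℝ) (π : Fin X → ℝ) : Fin X → ℝ :=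
  fun j => ∑ i, P i j * π i

/-- Normalization constant σ(π,y) = Σ_j B_{j,y} (Pᵀπ)_j. -/
noncomputable def obsMarg {X Y : ℕ} (B : Matrix (Fin X) (Fin Y) ℝ)
    (P : Matrix (Fin X) (Fin X) ℝ) (π : Fin X → ℝ) (y : Fin Y) : ℝ :=
  ∑ j, B j y * bayesPred P π j

/-- Bayes belief update T(π,y). -/
noncomputable def bayesT {X Y : ℕ} (B : Matrix (Fin X) (Fin Y) ℝ)
    (P : Matrix (Fin X) (Fin X) ℝ) (π : Fin X → ℝ) (y : Fin Y) : Fin X → ℝ :=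
  fun j => B j y * bayesPred P π j / obsMarg B P π y

/-- Value iteration: `V 0 ≡ 0`, `V (k+1) π = max_u [rᵤᵀπ + ρ Σ_y V k (T(π,y,u)) σ(π,y,u)]`. -/
noncomputable def VI {X Y U : ℕ} [NeZero U]
    (P : Fin U → Matrix (Fin X) (Fin X) ℝ)
    (B : Fin U → Matrix (Fin X) (Fin Y) ℝ)
    (r : Fin U → Fin X → ℝ) (ρ : ℝ) : ℕ → (Fin X → ℝ) → ℝ
  | 0 => fun _ => 0
  | (k+1) => fun π =>
      Finset.univ.sup' Finset.univ_nonempty fun u =>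
        (∑ i, r u i * π i) +
          ρ * ∑ y, VI P B r ρ k (bayesT (B u) (P u) π y) * obsMarg (B u) (P u) π y

/-- `Qfun P B r ρ k π u` is the value-iteration Q-function at horizon `k+1`,
i.e. `Q_{k+1}(π,u) = rᵤᵀπ + ρ Σ_y V_k(T(π,y,u)) σ(π,y,u)`. -/
noncomputable def Qfun {X Y U : ℕ} [NeZero U]
    (P : Fin U → Matrix (Fin X) (Fin X) ℝ)
    (B : Fin U → Matrix (Fin X) (Fin Y) ℝ)
    (r : Fin U → Fin X → ℝ) (ρ : ℝ) (k : ℕ) (π : Fin X → ℝ) (u : Fin U) : ℝ :=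
  (∑ i, r u i * π i) +
    ρ * ∑ y, VI P B r ρ k (bayesT (B u) (P u) π y) * obsMarg (B u) (P u) π y

/-- Lehmann precision of the pair `(A, C)` (i.e. `C >_L A`): for all columns `j, l`,
`g(i) = Σ_{y≤j} A i y − Σ_{y≤l} C i y` changes sign at most once,
from negative to positive, as the row `i` increases. -/
def LehmannPrec {X Y : ℕ} (A C : Matrix (Fin X) (Fin Y) ℝ) : Prop :=
  ∀ j l : Fin Y, ∀ i i' : Fin X, i ≤ i' →
    ((0 ≤ (∑ y ∈ univ.filter (· ≤ j), A i y) - ∑ y ∈ univ.filter (· ≤ l), C i y →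
      0 ≤ (∑ y ∈ univ.filter (· ≤ j), A i' y) - ∑ y ∈ univ.filter (· ≤ l), C i' y) ∧
     (0 < (∑ y ∈ univ.filter (· ≤ j), A i y) - ∑ y ∈ univ.filter (· ≤ l), C i y →
      0 < (∑ y ∈ univ.filter (· ≤ j), A i' y) - ∑ y ∈ univ.filter (· ≤ l), C i' y))

/-- Boundary/absolute-continuity condition (A7) for the pair `(A, C)` (C playing the role of
`B(u+1)`): `A_{i,1} C_{X,1} ≤ C_{i,1} A_{X,1}` and `A_{i,Y} C_{X,Y} ≥ C_{i,Y} A_{X,Y}`. -/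
def BoundaryCond {X Y : ℕ} [NeZero X] [NeZero Y] (A C : Matrix (Fin X) (Fin Y) ℝ) : Prop :=
  ∀ i : Fin X,
    A i 0 * C (lastIdx X) 0 ≤ C i 0 * A (lastIdx X) 0 ∧
    C i (lastIdx Y) * A (lastIdx X) (lastIdx Y) ≤ A i (lastIdx Y) * C (lastIdx X) (lastIdx Y)

/-- Copositive dominance `P1 ⪯ P2`. -/
def CopositiveDom {X : ℕ} (P1 P2 : Matrix (Fin X) (Fin X) ℝ) : Prop :=
  ∀ j j' : Fin X, j'.val = j.val + 1 → ∀ π : Fin X → ℝ, inSimplex π →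
    0 ≤ ∑ m, ∑ n, π m *
      ((1/2) * ((P1 m j * P2 n j' - P1 m j' * P2 n j) +
                (P1 n j * P2 m j' - P1 n j' * P2 m j))) * π n

/-- `u` is the largest maximizer of `f` over the action set. -/
def isLargestArgmax {U : ℕ} (f : Fin U → ℝ) (u : Fin U) : Prop :=
  (∀ v, f v ≤ f u) ∧ ∀ v, f u ≤ f v → v ≤ u

/-!
Value iteration preserves the form `V_k π = max_{γ ∈ Γ_k} γᵀπ` with `Γ_k` finite (the Bayes
update is undone by multiplying with `σ`), so on a segment `ε ↦ (1 - ε) π₀ + ε π₁` the value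
function is the upper envelope of finitely many affine functions of `ε`. Under (A1)–(A3) it is
monotone for the MLR order, the segment is MLR-increasing when `π₀ ≤_r π₁` (as for `π̄ ≤_r e_X`),
and `V_k ≥ 0`; so on `[0, 1]` the pieces of negative slope may be replaced by the constant
`V_k(π₀) ≥ 0`. An envelope of pieces with nonnegative slopes containing a nonnegative constant
is a sum of wedges: the steepest piece overtakes all others at a last crossing point `t`, which
contributes the wedge `(a - a') max(ε - t, 0)`, `a'` the next slope, and what remains is an
envelope with one slope fewer.
-/

lemma sum_sum_nonneg_of_add_swap_nonneg {ι : Type*} [Fintype ι] [LinearOrder ι]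
    {f : ι → ι → ℝ} (hdiag : ∀ i, f i i = 0) (h : ∀ i j, i < j → 0 ≤ f i j + f j i) :
    0 ≤ ∑ i, ∑ j, f i j := by
  have hswap : ∑ i, ∑ j, f i j = ∑ i, ∑ j, f j i := Finset.sum_comm
  have hsymm : 0 ≤ ∑ i, ∑ j, (f i j + f j i) := by
    refine sum_nonneg fun i _ => sum_nonneg fun j _ => ?_
    rcases lt_trichotomy i j with hij | rfl | hji
    · exact h i j hij
    · simp [hdiag]
    · rw [add_comm]; exact h j i hji
  simp only [sum_add_distrib] at hsymm
  linarith

section MLR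

variable {m n : ℕ}

lemma mlrle_refl (a : Fin n → ℝ) : MLRle a a := fun _ _ _ => (mul_comm _ _).le

lemma TP2.mlrle_col {A : Matrix (Fin m) (Fin n) ℝ} (hA : TP2 A) {y y' : Fin n} (hy : y < y') :
    MLRle (fun i => A i y) (fun i => A i y') := fun i j hij => by
  rw [mul_comm]; exact hA i j y y' hij hy

lemma MLRle.vecMul {A : Matrix (Fin m) (Fin n) ℝ} (hA : TP2 A) {a b : Fin m → ℝ}
    (hab : MLRle a b) : MLRle (fun j => ∑ i, A i j * a i) (fun j => ∑ i, A i j * b i) := by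
  intro j j' hjj'
  rw [sum_mul_sum, sum_mul_sum, ← sub_nonneg, ← sum_sub_distrib]
  simp_rw [← sum_sub_distrib]
  refine sum_sum_nonneg_of_add_swap_nonneg (fun i => by ring) fun i i' hii' => ?_
  calc (0 : ℝ) ≤ (A i j * A i' j' - A i j' * A i' j) * (a i * b i' - a i' * b i) :=
        mul_nonneg (sub_nonneg.2 (hA i i' j j' hii' hjj')) (sub_nonneg.2 (hab i i' hii'))
    _ = _ := by ring

lemma MLRle.sum_mul_le_sum_mul {a b : Fin n → ℝ} (hab : MLRle a b) (ha : ∑ i, a i = 1)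
    (hb : ∑ i, b i = 1) {φ : Fin n → ℝ} (hφ : Monotone φ) :
    ∑ i, φ i * a i ≤ ∑ i, φ i * b i := by
  have hsymm : 0 ≤ ∑ i, ∑ j, (φ i * b i * a j - φ i * a i * b j) := by
    refine sum_sum_nonneg_of_add_swap_nonneg (fun i => by ring) fun i j hij => ?_
    calc (0 : ℝ) ≤ (φ j - φ i) * (a i * b j - a j * b i) :=
          mul_nonneg (sub_nonneg.2 (hφ hij.le)) (sub_nonneg.2 (hab i j hij))
      _ = _ := by ring
  simp only [sum_sub_distrib, mul_assoc, ← mul_sum, ha, hb, mul_one] at hsymm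
  linarith

lemma MLRle.segment {a b : Fin n → ℝ} (hab : MLRle a b) {s t : ℝ} (hst : s ≤ t) :
    MLRle (fun j => (1 - s) * a j + s * b j) (fun j => (1 - t) * a j + t * b j) :=
  fun i j hij => by linear_combination mul_le_mul_of_nonneg_left (hab i j hij) (sub_nonneg.2 hst)

lemma MLRle.mul_div {a b w w' : Fin n → ℝ} (hab : MLRle a b) (hw : MLRle w w')
    (ha : ∀ i, 0 ≤ a i) (hb : ∀ i, 0 ≤ b i) (hw₀ : ∀ i, 0 ≤ w i) (hw₀' : ∀ i, 0 ≤ w' i)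
    {c d : ℝ} (hc : 0 < c) (hd : 0 < d) :
    MLRle (fun i => w i * a i / c) (fun i => w' i * b i / d) := fun i j hij => by
  have key := mul_le_mul (hw i j hij) (hab i j hij) (mul_nonneg (ha j) (hb i))
    (mul_nonneg (hw₀ i) (hw₀' j))
  rw [div_mul_div_comm, div_mul_div_comm]
  exact div_le_div_of_nonneg_right (by linear_combination key) (mul_pos hc hd).le

end MLR

section Simplex

variable {n : ℕ} {π₀ π₁ : Fin n → ℝ}

lemma inSimplex.segment (h₀ : inSimplex π₀) (h₁ : inSimplex π₁) {ε : ℝ} (hε₀ : 0 ≤ ε)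
    (hε₁ : ε ≤ 1) : inSimplex fun j => (1 - ε) * π₀ j + ε * π₁ j :=
  ⟨fun j => add_nonneg (mul_nonneg (sub_nonneg.2 hε₁) (h₀.1 j)) (mul_nonneg hε₀ (h₁.1 j)),
    by simp [sum_add_distrib, ← mul_sum, h₀.2, h₁.2]⟩

lemma inSimplex_indicator (i₀ : Fin n) : inSimplex fun j => if j = i₀ then (1 : ℝ) else 0 :=
  ⟨fun j => by dsimp only; split_ifs <;> norm_num, by simp⟩

lemma mlrle_indicator_lastIdx [NeZero n] (hπ : ∀ i, 0 ≤ π₀ i) :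
    MLRle π₀ fun j => if j = lastIdx n then 1 else 0 := by
  intro i j hij
  have hi : i ≠ lastIdx n := fun h => by
    have := j.isLt
    simp only [h, Fin.lt_def, lastIdx] at hij
    omega
  dsimp only
  rw [if_neg hi, mul_zero]
  exact mul_nonneg (hπ i) (by split_ifs <;> norm_num)

end Simplex

section Bayes

variable {X Y : ℕ} {B : Matrix (Fin X) (Fin Y) ℝ} {P : Matrix (Fin X) (Fin X) ℝ}
  {π π₁ π₂ : Fin X → ℝ}

lemma rowStochastic.sum_sum_mul {m n : ℕ} {A : Matrix (Fin m) (Fin n) ℝ}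
    (hA : rowStochastic A) (a : Fin m → ℝ) : ∑ j, ∑ i, A i j * a i = ∑ i, a i := by
  rw [sum_comm]
  simp only [← sum_mul, hA.2, one_mul]

lemma bayesPred_nonneg (hP : rowStochastic P) (hπ : ∀ i, 0 ≤ π i) (j : Fin X) :
    0 ≤ bayesPred P π j :=
  sum_nonneg fun i _ => mul_nonneg (hP.1 i j) (hπ i)

lemma sum_bayesPred (hP : rowStochastic P) (hπ : inSimplex π) : ∑ j, bayesPred P π j = 1 :=
  (hP.sum_sum_mul π).trans hπ.2

lemma sum_obsMarg (hB : rowStochastic B) (hP : rowStochastic P) (hπ : inSimplex π) :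
    ∑ y, obsMarg B P π y = 1 :=
  (hB.sum_sum_mul _).trans (sum_bayesPred hP hπ)

lemma obsMarg_pos (hB : ∀ i y, 0 < B i y) (hP : rowStochastic P) (hπ : inSimplex π)
    (y : Fin Y) : 0 < obsMarg B P π y := by
  obtain ⟨j, -, hj⟩ := exists_lt_of_sum_lt (s := univ) (f := 0) (g := bayesPred P π)
    (by simp [sum_bayesPred hP hπ])
  exact sum_pos' (fun j _ => mul_nonneg (hB j y).le (bayesPred_nonneg hP hπ.1 j))
    ⟨j, mem_univ j, mul_pos (hB j y) hj⟩

lemma inSimplex_bayesT (hB : ∀ i y, 0 < B i y) (hP : rowStochastic P) (hπ : inSimplex π)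
    (y : Fin Y) : inSimplex (bayesT B P π y) := by
  have hσ := obsMarg_pos hB hP hπ y
  refine ⟨fun j => div_nonneg (mul_nonneg (hB j y).le (bayesPred_nonneg hP hπ.1 j)) hσ.le, ?_⟩
  unfold bayesT
  rw [← sum_div]
  exact div_self hσ.ne'

lemma MLRle.obsMarg (hB2 : TP2 B) (hP2 : TP2 P) (h : MLRle π₁ π₂) :
    MLRle (obsMarg B P π₁) (obsMarg B P π₂) :=
  (h.vecMul hP2).vecMul hB2

lemma MLRle.bayesT (hB : ∀ i y, 0 < B i y) (hP : rowStochastic P) (hP2 : TP2 P)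
    (h₁ : inSimplex π₁) (h₂ : inSimplex π₂) (h : MLRle π₁ π₂) (y : Fin Y) :
    MLRle (bayesT B P π₁ y) (bayesT B P π₂ y) :=
  (h.vecMul hP2).mul_div (w := fun i => B i y) (mlrle_refl _) (bayesPred_nonneg hP h₁.1)
    (bayesPred_nonneg hP h₂.1) (fun i => (hB i y).le) (fun i => (hB i y).le)
    (obsMarg_pos hB hP h₁ y) (obsMarg_pos hB hP h₂ y)

lemma mlrle_bayesT_of_lt (hB : ∀ i y, 0 < B i y) (hB2 : TP2 B) (hP : rowStochastic P)
    (hπ : inSimplex π) {y y' : Fin Y} (hy : y < y') :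
    MLRle (bayesT B P π y) (bayesT B P π y') :=
  (mlrle_refl _).mul_div (hB2.mlrle_col hy) (bayesPred_nonneg hP hπ.1)
    (bayesPred_nonneg hP hπ.1) (fun i => (hB i y).le) (fun i => (hB i y').le)
    (obsMarg_pos hB hP hπ y) (obsMarg_pos hB hP hπ y')

end Bayes

section MaxOfLinear

variable {ι : Type*} [Fintype ι] {s : Set (ι → ℝ)}

def IsMaxOfLinearOn (s : Set (ι → ℝ)) (V : (ι → ℝ) → ℝ) : Prop :=
  ∃ Γ : Finset (ι → ℝ), ∃ hΓ : Γ.Nonempty, Set.EqOn V (fun π => Γ.sup' hΓ fun γ => γ ⬝ᵥ π) s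

lemma isMaxOfLinearOn_dotProduct (c : ι → ℝ) : IsMaxOfLinearOn s fun π => c ⬝ᵥ π :=
  ⟨{c}, singleton_nonempty c, fun _ _ => (sup'_singleton _).symm⟩

lemma isMaxOfLinearOn_zero : IsMaxOfLinearOn s fun _ => 0 := by
  simpa using isMaxOfLinearOn_dotProduct (s := s) 0

lemma IsMaxOfLinearOn.add {V W : (ι → ℝ) → ℝ} (hV : IsMaxOfLinearOn s V)
    (hW : IsMaxOfLinearOn s W) : IsMaxOfLinearOn s (V + W) := by
  classical
  obtain ⟨Γ, hΓ, hV⟩ := hV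
  obtain ⟨Δ, hΔ, hW⟩ := hW
  refine ⟨(Γ ×ˢ Δ).image fun p => p.1 + p.2, (hΓ.product hΔ).image _, fun π hπ => ?_⟩
  rw [Pi.add_apply, hV hπ, hW hπ]
  dsimp only
  rw [sup'_image, sup'_product_left, sup'_add]
  refine sup'_congr _ rfl fun γ _ => ?_
  simp only [add_sup', Function.comp_def, add_dotProduct]

lemma IsMaxOfLinearOn.const_mul {V : (ι → ℝ) → ℝ} (hV : IsMaxOfLinearOn s V) {c : ℝ}
    (hc : 0 ≤ c) : IsMaxOfLinearOn s fun π => c * V π := by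
  classical
  obtain ⟨Γ, hΓ, hV⟩ := hV
  refine ⟨Γ.image (c • ·), hΓ.image _, fun π hπ => ?_⟩
  simp only [hV hπ, mul₀_sup' hc, sup'_image, Function.comp_def, smul_dotProduct, smul_eq_mul]

lemma isMaxOfLinearOn_sum {κ : Type*} (t : Finset κ) {V : κ → (ι → ℝ) → ℝ}
    (hV : ∀ y ∈ t, IsMaxOfLinearOn s (V y)) : IsMaxOfLinearOn s fun π => ∑ y ∈ t, V y π := by
  simpa only [sum_fn] using
    sum_induction V (IsMaxOfLinearOn s) (fun _ _ => IsMaxOfLinearOn.add) isMaxOfLinearOn_zero hV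

lemma isMaxOfLinearOn_sup' {κ : Type*} [Fintype κ] [Nonempty κ] {V : κ → (ι → ℝ) → ℝ}
    (hV : ∀ u, IsMaxOfLinearOn s (V u)) :
    IsMaxOfLinearOn s fun π => univ.sup' univ_nonempty fun u => V u π := by
  classical
  choose Γ hΓ hV using hV
  refine ⟨univ.biUnion Γ, univ_nonempty.biUnion fun u _ => hΓ u, fun π hπ => ?_⟩
  simp only [sup'_biUnion _ univ_nonempty hΓ, hV _ hπ]

end MaxOfLinear

lemma IsMaxOfLinearOn.comp_bayesT_mul_obsMarg {X Y : ℕ} {B : Matrix (Fin X) (Fin Y) ℝ}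
    {P : Matrix (Fin X) (Fin X) ℝ} (hB : ∀ i y, 0 < B i y) (hP : rowStochastic P)
    {V : (Fin X → ℝ) → ℝ} (hV : IsMaxOfLinearOn {π | inSimplex π} V) (y : Fin Y) :
    IsMaxOfLinearOn {π | inSimplex π} fun π => V (bayesT B P π y) * obsMarg B P π y := by
  classical
  obtain ⟨Γ, hΓ, hV⟩ := hV
  refine ⟨Γ.image fun γ i => ∑ j, γ j * B j y * P i j, hΓ.image _, fun π hπ => ?_⟩
  have hσ := obsMarg_pos hB hP hπ y
  dsimp only
  rw [hV (inSimplex_bayesT hB hP hπ y), sup'_mul₀ hσ.le, sup'_image]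
  refine sup'_congr _ rfl fun γ _ => ?_
  calc γ ⬝ᵥ bayesT B P π y * obsMarg B P π y = ∑ j, γ j * B j y * bayesPred P π j := by
        simp only [dotProduct, bayesT, sum_mul]
        refine sum_congr rfl fun j _ => ?_
        field_simp
    _ = _ := by
        simp only [Function.comp_apply, dotProduct, bayesPred, mul_sum, sum_mul]
        rw [sum_comm]
        exact sum_congr rfl fun i _ => sum_congr rfl fun j _ => by ring

section Wedge

def IsWedgeSumOn (s : Set ℝ) (g : ℝ → ℝ) : Prop :=
  ∃ n, ∃ α f : Fin n → ℝ, (∀ i, 0 ≤ α i) ∧ Set.EqOn g (fun ε => ∑ i, max (α i * ε - f i) 0) s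

lemma isWedgeSumOn_const (s : Set ℝ) {c : ℝ} (hc : 0 ≤ c) : IsWedgeSumOn s fun _ => c :=
  ⟨1, ![0], ![-c], by simp, fun ε _ => by simp [hc]⟩

lemma IsWedgeSumOn.congr {s : Set ℝ} {g g' : ℝ → ℝ} (hg' : IsWedgeSumOn s g')
    (h : Set.EqOn g g' s) : IsWedgeSumOn s g := by
  obtain ⟨n, α, f, hα, hg'⟩ := hg'
  exact ⟨n, α, f, hα, h.trans hg'⟩

lemma IsWedgeSumOn.add_wedge {s : Set ℝ} {g : ℝ → ℝ} (hg : IsWedgeSumOn s g) {a : ℝ}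
    (ha : 0 ≤ a) (t : ℝ) : IsWedgeSumOn s fun ε => g ε + a * max (ε - t) 0 := by
  obtain ⟨n, α, f, hα, hg⟩ := hg
  refine ⟨n + 1, Fin.cons a α, Fin.cons (a * t) f, Fin.cases ha hα, fun ε hε => ?_⟩
  simp [Fin.sum_univ_succ, hg hε, mul_max_of_nonneg _ _ ha, mul_sub, add_comm]

def upperEnvelope (S : Finset (ℝ × ℝ)) (hS : S.Nonempty) (ε : ℝ) : ℝ :=
  S.sup' hS fun p => p.1 * ε + p.2

variable {S : Finset (ℝ × ℝ)} {hS : S.Nonempty}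

lemma upperEnvelope_insert [DecidableEq (ℝ × ℝ)] (hS : S.Nonempty) (p : ℝ × ℝ) (ε : ℝ) :
    upperEnvelope (insert p S) (insert_nonempty p S) ε =
      max (p.1 * ε + p.2) (upperEnvelope S hS ε) :=
  sup'_insert hS _

lemma upperEnvelope_le_add {c : ℝ} (hc : ∀ p ∈ S, p.1 ≤ c) {x y : ℝ} (hxy : x ≤ y) :
    upperEnvelope S hS y ≤ upperEnvelope S hS x + c * (y - x) :=
  sup'_le _ _ fun p hp => by
    have : p.1 * x + p.2 ≤ upperEnvelope S hS x := le_sup' (fun p : ℝ × ℝ => p.1 * x + p.2) hp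
    nlinarith [mul_le_mul_of_nonneg_right (hc p hp) (sub_nonneg.2 hxy)]

lemma upperEnvelope_at_lastCrossing {a b : ℝ} (h : ∀ q ∈ S, q.1 < a) :
    upperEnvelope S hS (S.sup' hS fun q => (q.2 - b) / (a - q.1)) =
      a * (S.sup' hS fun q => (q.2 - b) / (a - q.1)) + b := by
  obtain ⟨q₀, hq₀, hq₀t⟩ := exists_mem_eq_sup' hS fun q : ℝ × ℝ => (q.2 - b) / (a - q.1)
  refine le_antisymm (sup'_le _ _ fun q hq => ?_) (le_sup'_of_le _ hq₀ (le_of_eq ?_))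
  · have hq' : (q.2 - b) / (a - q.1) ≤ S.sup' hS fun q => (q.2 - b) / (a - q.1) :=
      le_sup' (fun q : ℝ × ℝ => (q.2 - b) / (a - q.1)) hq
    rw [div_le_iff₀ (sub_pos.2 (h q hq))] at hq'
    linarith
  · rw [hq₀t]
    field_simp [(sub_pos.2 (h q₀ hq₀)).ne']
    ring

lemma max_eq_max_add_wedge {E : ℝ → ℝ} {a b c t : ℝ}
    (hE : ∀ x y, x ≤ y → E y ≤ E x + c * (y - x)) (hca : c ≤ a) (ht : E t = a * t + b)
    (ε : ℝ) :
    max (a * ε + b) (E ε) = max (c * ε + (a * t + b - c * t)) (E ε) + (a - c) * max (ε - t) 0 := by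
  rcases le_total t ε with h | h
  · have := hE t ε h
    rw [max_eq_left (by nlinarith), max_eq_left (by nlinarith), max_eq_left (sub_nonneg.2 h)]
    ring
  · have := hE ε t h
    rw [max_eq_right (by nlinarith), max_eq_right (by nlinarith), max_eq_right (sub_nonpos.2 h)]
    ring

lemma upperEnvelope_eq_max_of_lexMax {p : ℝ × ℝ} (hp : p ∈ S)
    (hmax : ∀ q ∈ S, toLex q ≤ toLex p) (hlo : (S.filter (·.1 < p.1)).Nonempty) (ε : ℝ) :
    upperEnvelope S hS ε = max (p.1 * ε + p.2) (upperEnvelope _ hlo ε) := by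
  refine le_antisymm (sup'_le _ _ fun q hq => ?_)
    (max_le (le_sup' (fun q : ℝ × ℝ => q.1 * ε + q.2) hp) (sup'_le _ _ fun q hq =>
      le_sup' (fun q : ℝ × ℝ => q.1 * ε + q.2) (mem_filter.1 hq).1))
  rcases Prod.Lex.toLex_le_toLex.1 (hmax q hq) with hlt | ⟨heq, hle⟩
  · exact le_max_of_le_right (le_sup' (fun q : ℝ × ℝ => q.1 * ε + q.2) (mem_filter.2 ⟨hq, hlt⟩))
  · exact le_max_of_le_left (by rw [heq]; linarith)

theorem isWedgeSumOn_upperEnvelope (S : Finset (ℝ × ℝ)) (hS : S.Nonempty)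
    (hslope : ∀ p ∈ S, 0 ≤ p.1) (hflat : ∃ c, 0 ≤ c ∧ (0, c) ∈ S) :
    IsWedgeSumOn Set.univ (upperEnvelope S hS) := by
  classical
  induction hn : (S.image Prod.fst).card using Nat.strong_induction_on generalizing S with
  | _ n ih =>
  obtain ⟨c₀, hc₀, hc₀S⟩ := hflat
  obtain ⟨p, hpS, hpmax⟩ := S.exists_max_image toLex hS
  by_cases hlo : (S.filter (·.1 < p.1)).Nonempty
  · -- `p` is the steepest piece and `q` a piece of the next slope. Past the last crossing `t`
    -- of `p` with the flatter pieces the envelope follows `p`, so it is the envelope of `S'`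
    -- (`p` replaced by the piece of slope `q.1` through `(t, p t)`) plus a wedge at `t`.
    obtain ⟨q, hq, hqmax⟩ := (S.filter (·.1 < p.1)).exists_max_image Prod.fst hlo
    have hqp : q.1 < p.1 := (mem_filter.1 hq).2
    set t := (S.filter (·.1 < p.1)).sup' hlo fun q => (q.2 - p.2) / (p.1 - q.1)
    set S' := insert (q.1, p.1 * t + p.2 - q.1 * t) (S.filter (·.1 < p.1))
    have hsplit : ∀ ε, upperEnvelope S hS ε =
        upperEnvelope S' (insert_nonempty _ _) ε + (p.1 - q.1) * max (ε - t) 0 := fun ε => by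
      rw [upperEnvelope_eq_max_of_lexMax hpS hpmax hlo, upperEnvelope_insert hlo]
      exact max_eq_max_add_wedge (fun x y => upperEnvelope_le_add hqmax) hqp.le
        (upperEnvelope_at_lastCrossing fun q hq => (mem_filter.1 hq).2) ε
    have hS'lt : ∀ q' ∈ S', q'.1 < p.1 := by
      simp only [S', Finset.mem_insert, mem_filter]
      rintro q' (rfl | ⟨-, h⟩)
      exacts [hqp, h]
    have hcard : (S'.image Prod.fst).card < n := by
      rw [← hn]
      refine card_lt_card ((Finset.ssubset_iff_of_subset ?_).2 ⟨p.1, mem_image_of_mem _ hpS, ?_⟩)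
      · simp only [S', image_insert, insert_subset_iff]
        exact ⟨mem_image_of_mem _ (mem_filter.1 hq).1,
          image_subset_image (filter_subset _ _)⟩
      · exact fun h => by
          obtain ⟨q', hq', he⟩ := mem_image.1 h
          exact (hS'lt q' hq').ne he
    have hc₀S' : (0, c₀) ∈ S' :=
      mem_insert_of_mem (mem_filter.2 ⟨hc₀S, (hslope q (mem_filter.1 hq).1).trans_lt hqp⟩)
    have hS' : ∀ q' ∈ S', 0 ≤ q'.1 := by
      simp only [S', Finset.mem_insert, mem_filter]
      rintro q' (rfl | ⟨h, -⟩)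
      exacts [hslope q (mem_filter.1 hq).1, hslope q' h]
    exact ((ih _ hcard S' _ hS' ⟨c₀, hc₀, hc₀S'⟩ rfl).add_wedge (sub_nonneg.2 hqp.le) t).congr
      fun ε _ => hsplit ε
  · have hsame : ∀ q ∈ S, q.1 = p.1 ∧ q.2 ≤ p.2 := fun q hq => by
      rcases Prod.Lex.toLex_le_toLex.1 (hpmax q hq) with hlt | h
      exacts [(hlo ⟨q, mem_filter.2 ⟨hq, hlt⟩⟩).elim, h]
    have hp0 : p.1 = 0 := (hsame _ hc₀S).1.symm
    refine (isWedgeSumOn_const Set.univ (hc₀.trans (hsame _ hc₀S).2)).congr fun ε _ =>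
      le_antisymm (sup'_le _ _ fun q hq => ?_) (le_sup'_of_le _ hpS (by simp [hp0]))
    simp [(hsame q hq).1, hp0, (hsame q hq).2]

lemma upperEnvelope_eqOn_of_monotoneOn [DecidableEq (ℝ × ℝ)] {a b : ℝ}
    (hmono : MonotoneOn (upperEnvelope S hS) (Set.Icc a b)) :
    Set.EqOn (upperEnvelope S hS)
      (upperEnvelope (insert (0, upperEnvelope S hS a) (S.filter (0 ≤ ·.1)))
        (insert_nonempty _ _)) (Set.Icc a b) := by
  intro ε hε
  have hga : upperEnvelope S hS a ≤ upperEnvelope S hS ε :=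
    hmono ⟨le_rfl, hε.1.trans hε.2⟩ hε hε.1
  refine le_antisymm (sup'_le _ _ fun q hq => ?_) (sup'_le _ _ fun q hq => ?_)
  · rcases le_or_gt 0 q.1 with hq0 | hq0
    · exact le_sup' (fun q : ℝ × ℝ => q.1 * ε + q.2) (mem_insert_of_mem (mem_filter.2 ⟨hq, hq0⟩))
    · refine le_sup'_of_le _ (mem_insert_self _ _) ?_
      have : q.1 * a + q.2 ≤ upperEnvelope S hS a := le_sup' (fun q : ℝ × ℝ => q.1 * a + q.2) hq
      dsimp only
      nlinarith [hε.1]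
  · rcases Finset.mem_insert.1 hq with rfl | hq
    · simpa using hga
    · exact le_sup' (fun q : ℝ × ℝ => q.1 * ε + q.2) (mem_filter.1 hq).1

theorem isWedgeSumOn_Icc_of_monotoneOn {a b : ℝ}
    (hmono : MonotoneOn (upperEnvelope S hS) (Set.Icc a b)) (ha : 0 ≤ upperEnvelope S hS a) :
    IsWedgeSumOn (Set.Icc a b) (upperEnvelope S hS) := by
  classical
  obtain ⟨n, α, f, hα, h⟩ := isWedgeSumOn_upperEnvelope
    (insert (0, upperEnvelope S hS a) (S.filter (0 ≤ ·.1))) (insert_nonempty _ _)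
    (by simp +contextual) ⟨_, ha, mem_insert_self _ _⟩
  exact ⟨n, α, f, hα, (upperEnvelope_eqOn_of_monotoneOn hmono).trans (h.mono (Set.subset_univ _))⟩

end Wedge

section ValueIteration

variable {X Y U : ℕ} [NeZero U] {P : Fin U → Matrix (Fin X) (Fin X) ℝ}
  {B : Fin U → Matrix (Fin X) (Fin Y) ℝ} {r : Fin U → Fin X → ℝ} {ρ : ℝ}

lemma VI_nonneg (hP : ∀ u, rowStochastic (P u)) (hB : ∀ u i y, 0 < B u i y)
    (hr : ∀ u i, 0 ≤ r u i) (hρ : 0 ≤ ρ) (k : ℕ) {π : Fin X → ℝ} (hπ : inSimplex π) :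
    0 ≤ VI P B r ρ k π := by
  induction k generalizing π with
  | zero => exact le_rfl
  | succ k ih =>
    refine le_sup'_of_le _ (mem_univ 0) (add_nonneg ?_ (mul_nonneg hρ ?_))
    · exact sum_nonneg fun i _ => mul_nonneg (hr 0 i) (hπ.1 i)
    · exact sum_nonneg fun y _ => mul_nonneg (ih (inSimplex_bayesT (hB 0) (hP 0) hπ y))
        (obsMarg_pos (hB 0) (hP 0) hπ y).le

lemma VI_mono_of_mlrle (hP : ∀ u, rowStochastic (P u)) (hBrs : ∀ u, rowStochastic (B u))
    (hB : ∀ u i y, 0 < B u i y) (hρ : 0 ≤ ρ) (hA1 : ∀ u, Monotone (r u))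
    (hA2 : ∀ u, TP2 (P u)) (hA3 : ∀ u, TP2 (B u)) (k : ℕ) {π₁ π₂ : Fin X → ℝ}
    (h₁ : inSimplex π₁) (h₂ : inSimplex π₂) (h : MLRle π₁ π₂) :
    VI P B r ρ k π₁ ≤ VI P B r ρ k π₂ := by
  induction k generalizing π₁ π₂ with
  | zero => exact le_rfl
  | succ k ih =>
    refine sup'_le univ_nonempty _ fun u _ => le_sup'_of_le _ (mem_univ u) ?_
    set V : Fin Y → ℝ := fun y => VI P B r ρ k (bayesT (B u) (P u) π₁ y)
    have hV : Monotone V := monotone_iff_forall_lt.2 fun y y' hy =>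
      ih (inSimplex_bayesT (hB u) (hP u) h₁ y) (inSimplex_bayesT (hB u) (hP u) h₁ y')
        (mlrle_bayesT_of_lt (hB u) (hA3 u) (hP u) h₁ hy)
    have hreward : ∑ i, r u i * π₁ i ≤ ∑ i, r u i * π₂ i :=
      h.sum_mul_le_sum_mul h₁.2 h₂.2 (hA1 u)
    have hobs : ∑ y, V y * obsMarg (B u) (P u) π₁ y ≤ ∑ y, V y * obsMarg (B u) (P u) π₂ y :=
      (h.obsMarg (hA3 u) (hA2 u)).sum_mul_le_sum_mul (sum_obsMarg (hBrs u) (hP u) h₁)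
        (sum_obsMarg (hBrs u) (hP u) h₂) hV
    have hnext : ∑ y, V y * obsMarg (B u) (P u) π₂ y ≤
        ∑ y, VI P B r ρ k (bayesT (B u) (P u) π₂ y) * obsMarg (B u) (P u) π₂ y :=
      sum_le_sum fun y _ => mul_le_mul_of_nonneg_right
        (ih (inSimplex_bayesT (hB u) (hP u) h₁ y) (inSimplex_bayesT (hB u) (hP u) h₂ y)
          (h.bayesT (hB u) (hP u) (hA2 u) h₁ h₂ y))
        (obsMarg_pos (hB u) (hP u) h₂ y).le
    exact add_le_add hreward (mul_le_mul_of_nonneg_left (hobs.trans hnext) hρ)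

lemma VI_isMaxOfLinearOn (hP : ∀ u, rowStochastic (P u)) (hB : ∀ u i y, 0 < B u i y)
    (hρ : 0 ≤ ρ) (k : ℕ) : IsMaxOfLinearOn {π | inSimplex π} (VI P B r ρ k) := by
  induction k with
  | zero => exact isMaxOfLinearOn_zero
  | succ k ih =>
    exact isMaxOfLinearOn_sup' fun u => (isMaxOfLinearOn_dotProduct (r u)).add
      ((isMaxOfLinearOn_sum univ fun y _ =>
        ih.comp_bayesT_mul_obsMarg (hB u) (hP u) y).const_mul hρ)

theorem VI_isWedgeSumOn_segment (hP : ∀ u, rowStochastic (P u))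
    (hBrs : ∀ u, rowStochastic (B u)) (hB : ∀ u i y, 0 < B u i y) (hρ : 0 ≤ ρ)
    (hr : ∀ u i, 0 ≤ r u i) (hA1 : ∀ u, Monotone (r u)) (hA2 : ∀ u, TP2 (P u))
    (hA3 : ∀ u, TP2 (B u)) {π₀ π₁ : Fin X → ℝ} (h₀ : inSimplex π₀) (h₁ : inSimplex π₁)
    (h01 : MLRle π₀ π₁) (k : ℕ) :
    IsWedgeSumOn (Set.Icc 0 1) fun ε => VI P B r ρ k fun j => (1 - ε) * π₀ j + ε * π₁ j := by
  classical
  have hseg : ∀ ε ∈ Set.Icc (0 : ℝ) 1, inSimplex fun j => (1 - ε) * π₀ j + ε * π₁ j :=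
    fun ε hε => h₀.segment h₁ hε.1 hε.2
  obtain ⟨Γ, hΓ, hV⟩ := VI_isMaxOfLinearOn (r := r) hP hB hρ k
  set S := Γ.image fun γ => (γ ⬝ᵥ π₁ - γ ⬝ᵥ π₀, γ ⬝ᵥ π₀)
  have hVS : Set.EqOn (fun ε => VI P B r ρ k fun j => (1 - ε) * π₀ j + ε * π₁ j)
      (upperEnvelope S (hΓ.image _)) (Set.Icc 0 1) := fun ε hε => by
    dsimp only
    rw [hV (hseg ε hε), upperEnvelope, sup'_image]
    refine sup'_congr _ rfl fun γ _ => ?_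
    simp only [Function.comp_apply, dotProduct, mul_add, sum_add_distrib, mul_left_comm _ (1 - ε),
      mul_left_comm _ ε, ← mul_sum]
    ring
  refine IsWedgeSumOn.congr (isWedgeSumOn_Icc_of_monotoneOn (fun x hx y hy hxy => ?_) ?_) hVS
  · rw [← hVS hx, ← hVS hy]
    exact VI_mono_of_mlrle hP hBrs hB hρ hA1 hA2 hA3 k (hseg x hx) (hseg y hy)
      (h01.segment hxy)
  · rw [← hVS ⟨le_rfl, zero_le_one⟩]
    exact VI_nonneg hP hB hr hρ k (hseg 0 ⟨le_rfl, zero_le_one⟩)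

end ValueIteration

theorem value_function_wedge_sum_on_lines_general
    (X Y U : ℕ) [NeZero X] [NeZero U]
    (P : Fin U → Matrix (Fin X) (Fin X) ℝ) (hPrs : ∀ u, rowStochastic (P u))
    (B : Fin U → Matrix (Fin X) (Fin Y) ℝ) (hBrs : ∀ u, rowStochastic (B u))
    (hBpos : ∀ u i y, 0 < B u i y)
    (r : Fin U → Fin X → ℝ) (ρ : ℝ) (hρ0 : 0 ≤ ρ)
    (hrnonneg : ∀ u i, 0 ≤ r u i)
    (hA1 : ∀ u, Monotone (r u))
    (hA2 : ∀ u, TP2 (P u))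
    (hA3 : ∀ u, TP2 (B u)) :
    ∀ k : ℕ, ∀ πb : Fin X → ℝ, inSimplex πb → πb (lastIdx X) = 0 →
      ∃ n : ℕ, ∃ α f : Fin n → ℝ, (∀ i, 0 ≤ α i) ∧
        ∀ ε : ℝ, 0 ≤ ε → ε ≤ 1 →
          VI P B r ρ k
              (fun j => (1 - ε) * πb j + ε * (if j = lastIdx X then 1 else 0)) =
            ∑ i, max (α i * ε - f i) 0 := by
  intro k πb hπb _
  obtain ⟨n, α, f, hα, h⟩ := VI_isWedgeSumOn_segment hPrs hBrs hBpos hρ0 hrnonneg hA1 hA2 hA3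
    hπb (inSimplex_indicator _) (mlrle_indicator_lastIdx hπb.1) k
  exact ⟨n, α, f, hα, fun ε h0 h1 => h ⟨h0, h1⟩⟩

/-- Theorem 4 (statement 3): under A1–A3 and nonnegative rewards, on each line segment
`ℓ(e_X, π̄)` from a belief `π̄` with `π̄(X) = 0` to the vertex `e_X`, the value function
is a finite sum of wedge functions of the scalar coordinate `ε = e_Xᵀπ`. -/
theorem value_function_wedge_sum_on_lines
    (X Y U : ℕ) [NeZero X] [NeZero U]
    (P : Fin U → Matrix (Fin X) (Fin X) ℝ) (hPrs : ∀ u, rowStochastic (P u))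
    (B : Fin U → Matrix (Fin X) (Fin Y) ℝ) (hBrs : ∀ u, rowStochastic (B u))
    (hBpos : ∀ u i y, 0 < B u i y)
    (r : Fin U → Fin X → ℝ) (ρ : ℝ) (hρ0 : 0 ≤ ρ) (hρ1 : ρ < 1)
    (hrnonneg : ∀ u i, 0 ≤ r u i)
    (hA1 : ∀ u, Monotone (r u))
    (hA2 : ∀ u, TP2 (P u))
    (hA3 : ∀ u, TP2 (B u)) :
    ∀ k : ℕ, ∀ πb : Fin X → ℝ, inSimplex πb → πb (lastIdx X) = 0 →
      ∃ n : ℕ, ∃ α f : Fin n → ℝ, (∀ i, 0 ≤ α i) ∧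
        ∀ ε : ℝ, 0 ≤ ε → ε ≤ 1 →
          VI P B r ρ k
              (fun j => (1 - ε) * πb j + ε * (if j = lastIdx X then 1 else 0)) =
            ∑ i, max (α i * ε - f i) 0 :=
  value_function_wedge_sum_on_lines_general X Y U P hPrs B hBrs hBpos r ρ hρ0 hrnonneg hA1 hA2 hA3
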